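/- arXiv:1505.00647 — 8 statements merged into one kernel-verified Lean document; each statement's English description precedes it below -/
import Mathlib

section
/- Let k ≥ 0 be an even integer. Then there exist integers x, y, z such that x² + x + y² + y + z² + z = k. -/
theorem round_lem (a m : ℤ) (ha : 0 < a) : ∃ x r : ℤ, a*x + m = r ∧ 2*|r| ≤ a := by
  have h2 : 0 ≤ m % a := Int.emod_nonneg m (by omega)
  have h3 : m % a < a := Int.emod_lt_of_pos m ha
  have h4 : a * (m / a) + m % a = m := Int.mul_ediv_add_emod m a
  by_cases hc : 2*(m % a) ≤ a
  · exact ⟨-(m / a), m % a, by linarith [h4], by rw [abs_of_nonneg h2]; omega⟩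
  · exact ⟨-(m / a) - 1, m % a - a, by ring_nf; linarith [h4], by rw [abs_of_nonpos (by omega)]; omega⟩

theorem bin_min : ∀ N : ℕ, ∀ a b c : ℤ, a.toNat ≤ N → 0 < a → 0 < a*c - b*b →
    ∃ y z : ℤ, IsCoprime y z ∧ 0 < a*y^2 + 2*b*y*z + c*z^2 ∧
      3*(a*y^2 + 2*b*y*z + c*z^2)^2 ≤ 4*(a*c - b*b) := by
  intro N
  induction N with
  | zero => intro a b c hN ha _; omega
  | succ N IH =>
    intro a b c hN ha hd
    obtain ⟨x, b', hb'def, hb'⟩ := round_lem a b ha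
    set c' : ℤ := a*x^2 + 2*b*x + c with hc'
    have hdet : a*c' - b'*b' = a*c - b*b := by rw [← hb'def]; ring
    have hc'pos : 0 < c' := by nlinarith [sq_nonneg (a*x + b), sq_nonneg b']
    by_cases hlt : c' < a
    · obtain ⟨y, z, hyz, hval, hbnd⟩ := IH c' b' a (by omega) hc'pos (by rw [mul_comm]; omega)
      refine ⟨z + x*y, y, ?_, ?_, ?_⟩
      · exact (hyz.symm.add_mul_right_left x)
      · have heq : a*(z + x*y)^2 + 2*b*(z + x*y)*y + c*y^2 = c'*y^2 + 2*b'*y*z + a*z^2 := by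
          rw [← hb'def, hc']; ring
        rw [heq]; exact hval
      · have heq : a*(z + x*y)^2 + 2*b*(z + x*y)*y + c*y^2 = c'*y^2 + 2*b'*y*z + a*z^2 := by
          rw [← hb'def, hc']; ring
        have h2 : c'*a - b'*b' = a*c - b*b := by rw [mul_comm]; exact hdet
        rw [heq]; linarith [hbnd]
    · refine ⟨1, 0, isCoprime_one_left, by simpa using ha, ?_⟩
      have h4 : 4*(b'*b') ≤ a*a := by
        have := sq_abs b'
        nlinarith [hb', abs_nonneg b']
      nlinarith [hdet]

def Fq (a b c u v w x y z : ℤ) : ℤ := a*x^2 + b*y^2 + c*z^2 + 2*u*x*y + 2*v*x*z + 2*w*y*z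

theorem bin_sum2 (a b c : ℤ) (ha : 0 < a) (hd : a*c - b*b = 1) (x y : ℤ) :
    ∃ s t : ℤ, a*x^2 + 2*b*x*y + c*y^2 = s^2 + t^2 := by
  obtain ⟨y₀, z₀, _, hm, hbnd⟩ := bin_min a.toNat a b c le_rfl ha (by omega)
  set m : ℤ := a*y₀^2 + 2*b*y₀*z₀ + c*z₀^2 with hmdef
  have hm1 : m = 1 := by nlinarith [hm, hbnd]
  refine ⟨a*y₀*x + b*(y₀*y + x*z₀) + c*z₀*y, y₀*y - x*z₀, ?_⟩
  have hcomp : m * (a*x^2 + 2*b*x*y + c*y^2) =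
      (a*y₀*x + b*(y₀*y + x*z₀) + c*z₀*y)^2 + (a*c - b*b)*(y₀*y - x*z₀)^2 := by
    rw [hmdef]; ring
  rw [hm1, one_mul] at hcomp
  rw [hcomp, hd]; ring

theorem ter_key : ∀ N : ℕ, ∀ a b c u v w : ℤ, a.toNat ≤ N → 0 < a →
    (∀ x y z : ℤ, ¬(x = 0 ∧ y = 0 ∧ z = 0) → 0 < Fq a b c u v w x y z) →
    (a*b*c + 2*u*v*w - a*w^2 - b*v^2 - c*u^2 = 1) →
    ∀ n : ℤ, (∃ x y z : ℤ, Fq a b c u v w x y z = n) →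
    ∃ p q r : ℤ, n = p^2 + q^2 + r^2 := by
  intro N
  induction N with
  | zero => intro a b c u v w hN ha _ _ _ _; omega
  | succ N IH =>
    intro a b c u v w hN ha hpos hdet n hrep
    by_cases ha1 : a = 1
    · -- base case: split off a square
      subst ha1
      obtain ⟨X, Y, Z, hXYZ⟩ := hrep
      have hb' : 0 < b - u*u := by
        have := hpos (-u) 1 0 (by simp)
        simp only [Fq] at this; nlinarith
      have hdg : (b - u*u)*(c - v*v) - (w - u*v)*(w - u*v) = 1 := by nlinarith [hdet]
      obtain ⟨s, t, hst⟩ := bin_sum2 (b - u*u) (w - u*v) (c - v*v) hb' hdg Y Z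
      refine ⟨X + u*Y + v*Z, s, t, ?_⟩
      have : n = (X + u*Y + v*Z)^2 + ((b - u*u)*Y^2 + 2*(w - u*v)*Y*Z + (c - v*v)*Z^2) := by
        rw [← hXYZ]; simp only [Fq]; ring
      rw [this, hst]; ring
    · have ha2 : 2 ≤ a := by omega
      -- completion binary form N(y,z), det = a
      have hA2 : 0 < a*b - u*u := by
        have := hpos (-u) a 0 (by simp; omega)
        simp only [Fq] at this; nlinarith
      have hdN : (a*b - u*u)*(a*c - v*v) - (a*w - u*v)*(a*w - u*v) = a := by nlinarith [hdet]
      obtain ⟨y₀, z₀, hcop, hm, hmbnd⟩ := bin_min (a*b - u*u).toNat (a*b - u*u)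
        (a*w - u*v) (a*c - v*v) le_rfl hA2 (by rw [hdN]; omega)
      set m : ℤ := (a*b - u*u)*y₀^2 + 2*(a*w - u*v)*y₀*z₀ + (a*c - v*v)*z₀^2 with hmdef
      rw [hdN] at hmbnd
      obtain ⟨x₀, r, hrdef, hr⟩ := round_lem a (u*y₀ + v*z₀) ha
      have hkey : a * Fq a b c u v w x₀ y₀ z₀ = r^2 + m := by
        rw [← hrdef]; simp only [Fq, hmdef]; ring
      set a' : ℤ := Fq a b c u v w x₀ y₀ z₀ with ha'
      have hVne : ¬(x₀ = 0 ∧ y₀ = 0 ∧ z₀ = 0) := by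
        rintro ⟨_, h2, h3⟩; rw [h2, h3] at hcop; exact not_isCoprime_zero_zero hcop
      have ha'pos : 0 < a' := hpos _ _ _ hVne
      have hr2 : 4*r^2 ≤ a^2 := by
        have := sq_abs r; nlinarith [hr, abs_nonneg r]
      have ha'lt : a' < a := by nlinarith [hmbnd, hm, hr2, hkey, ha2, ha'pos]
      obtain ⟨p, q, hpq⟩ := hcop
      -- new coefficients
      set c'' : ℤ := Fq a b c u v w 0 q (-p) with hc''
      set v'' : ℤ := x₀*(u*q - v*p) + y₀*(b*q - w*p) + z₀*(w*q - c*p) with hv''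
      set w'' : ℤ := u*q - v*p with hw''
      have hC1 : ∀ X Y Z : ℤ, Fq a' a c'' r v'' w'' X Y Z =
          Fq a b c u v w (x₀*X + Y) (y₀*X + q*Z) (z₀*X - p*Z) := by
        intro X Y Z
        simp only [Fq, ha', hc'', hv'', hw'', ← hrdef]; ring
      have hdet' : a'*a*c'' + 2*r*v''*w'' - a'*w''^2 - a*v''^2 - c''*r^2 = 1 := by
        have hgen : a'*a*c'' + 2*r*v''*w'' - a'*w''^2 - a*v''^2 - c''*r^2 =
            (a*b*c + 2*u*v*w - a*w^2 - b*v^2 - c*u^2) * (p*y₀ + q*z₀)^2 := by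
          simp only [ha', hc'', hv'', hw'', ← hrdef, Fq]; ring
        rw [hgen, hdet, hpq]; ring
      have hpos' : ∀ X Y Z : ℤ, ¬(X = 0 ∧ Y = 0 ∧ Z = 0) → 0 < Fq a' a c'' r v'' w'' X Y Z := by
        intro X Y Z hne
        rw [hC1]
        refine hpos _ _ _ ?_
        rintro ⟨h1, h2, h3⟩
        have hX : X = 0 := by
          have : X * (p*y₀ + q*z₀) = p*(y₀*X + q*Z) + q*(z₀*X - p*Z) := by ring
          rw [hpq, h2, h3] at this; simpa using this
        have hY : Y = 0 := by rw [hX] at h1; simpa using h1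
        have hZ : Z = 0 := by
          have : Z * (p*y₀ + q*z₀) = y₀*(-(z₀*X - p*Z)) + z₀*(y₀*X + q*Z) := by ring
          rw [hpq, h2, h3] at this; simpa using this
        exact hne ⟨hX, hY, hZ⟩
      have hrep' : ∃ X Y Z : ℤ, Fq a' a c'' r v'' w'' X Y Z = n := by
        obtain ⟨X, Y, Z, hXYZ⟩ := hrep
        refine ⟨p*Y + q*Z, X - p*x₀*Y - q*x₀*Z, z₀*Y - y₀*Z, ?_⟩
        rw [hC1]
        have e1 : x₀*(p*Y + q*Z) + (X - p*x₀*Y - q*x₀*Z) = X := by ring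
        have e2 : y₀*(p*Y + q*Z) + q*(z₀*Y - y₀*Z) = Y := by linear_combination Y * hpq
        have e3 : z₀*(p*Y + q*Z) - p*(z₀*Y - y₀*Z) = Z := by linear_combination Z * hpq
        rw [e1, e2, e3, hXYZ]
      exact IH a' a c'' r v'' w'' (by omega) ha'pos hpos' (by linarith [hdet']) n hrep'



theorem sylvester3 (a b c u v w : ℤ) (ha : 0 < a) (h2 : 0 < a*b - u*u)
    (h3 : 0 < a*b*c + 2*u*v*w - a*w^2 - b*v^2 - c*u^2) (x y z : ℤ)
    (hne : ¬(x=0 ∧ y=0 ∧ z=0)) : 0 < Fq a b c u v w x y z := by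
  have key : a*(a*b - u*u)*(Fq a b c u v w x y z) =
      (a*b - u*u)*(a*x + u*y + v*z)^2 + ((a*b - u*u)*y + (a*w - u*v)*z)^2
        + a*(a*b*c + 2*u*v*w - a*w^2 - b*v^2 - c*u^2)*z^2 := by
    simp only [Fq]; ring
  have had : 0 < a*(a*b - u*u) := mul_pos ha h2
  by_contra hF
  push_neg at hF
  have h0 : 0 ≤ a*(a*b - u*u) * (-(Fq a b c u v w x y z)) :=
    mul_nonneg had.le (neg_nonneg.2 hF)
  by_cases hz : z = 0
  · subst hz
    by_cases hy : y = 0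
    · subst hy
      have hx : x ≠ 0 := by tauto
      have hx2 : 0 < x^2 := by positivity
      nlinarith [key, h0, mul_pos h2 (mul_pos (mul_pos ha ha) hx2)]
    · have hy2 : 0 < y^2 := by positivity
      nlinarith [key, h0, sq_nonneg (a*x + u*y), mul_pos (mul_pos h2 h2) hy2]
  · have hz2 : 0 < z^2 := by positivity
    nlinarith [key, h0, sq_nonneg (a*x + u*y + v*z), sq_nonneg ((a*b - u*u)*y + (a*w - u*v)*z),
      mul_pos (mul_pos ha h3) hz2]

theorem sq_mod4 (t : ℤ) : (Odd t ∧ t^2 % 4 = 1) ∨ (Even t ∧ t^2 % 4 = 0) := by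
  rcases Int.even_or_odd t with h | h
  · obtain ⟨x, rfl⟩ := h
    refine Or.inr ⟨⟨x, rfl⟩, ?_⟩
    have : (x+x)^2 = 4*x^2 := by ring
    rw [this]; exact Int.mul_emod_right 4 _
  · obtain ⟨x, rfl⟩ := h
    refine Or.inl ⟨⟨x, rfl⟩, ?_⟩
    have : (2*x+1)^2 = 4*(x^2+x) + 1 := by ring
    rw [this]; omega


open scoped NumberTheorySymbols


theorem three_squares_pre (n : ℕ) (hn8 : n % 8 = 3) :
    ∃ Q H S t : ℤ, 0 < Q ∧ (n:ℤ) * H = 2*Q + 1 ∧ 2*Q*S = t^2 + n := by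
  obtain ⟨j, hj⟩ : ∃ j, n = 8*j + 3 := ⟨n / 8, by omega⟩
  have hn3 : 3 ≤ n := by omega
  haveI : NeZero (4*n) := ⟨by omega⟩
  set a : ℕ := 4*j + 1 with ha
  -- a is a unit mod 4n
  have hcop : Nat.Coprime a (4*n) := by
    rw [← Nat.isCoprime_iff_coprime]
    exact ⟨(8*(j:ℤ)+1), -(j:ℤ), by push_cast [hj, ha]; ring⟩
  have hunit : IsUnit ((a : ℕ) : ZMod (4*n)) := (ZMod.isUnit_iff_coprime a (4*n)).mpr hcop
  obtain ⟨q, hqgt, hqprime, hqmod⟩ := Nat.forall_exists_prime_gt_and_eq_mod hunit (4*n)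
  haveI : Fact q.Prime := ⟨hqprime⟩
  have hmod : q ≡ a [MOD 4*n] := (ZMod.natCast_eq_natCast_iff q a (4*n)).mp hqmod
  have hmod4 : q % 4 = 1 := by
    have h4 : q ≡ a [MOD 4] := hmod.of_dvd ⟨n, by ring⟩
    have : q % 4 = a % 4 := h4
    omega
  have hmodn : q ≡ a [MOD n] := hmod.of_dvd ⟨4, by ring⟩
  have hqodd : Odd q := by rw [Nat.odd_iff]; omega
  have hnodd : Odd n := by rw [Nat.odd_iff]; omega
  -- n ∣ 2q + 1
  have hdvd1 : n ∣ 2*q + 1 := by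
    have h1 : 2*q + 1 ≡ 2*a + 1 [MOD n] := (hmod.of_dvd ⟨4, by ring⟩).mul_left 2 |>.add_right 1
    have h2 : 2*a + 1 = n := by omega
    rw [h2] at h1
    have h3 : (2*q+1) % n = n % n := h1
    rw [Nat.mod_self] at h3
    exact Nat.dvd_of_mod_eq_zero h3
  -- Jacobi symbol computation: J(-n | q) = 1
  have hqn : ¬ (q ∣ n) := fun hdvd => by
    have := Nat.le_of_dvd (by omega) hdvd; omega
  have hJ2 : J(2 | n) = -1 := by
    rw [jacobiSym.at_two hnodd, ZMod.χ₈_nat_eq_if_mod_eight]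
    simp [hn8]; omega
  have hJneg2 : J(-2 | n) = 1 := by
    rw [jacobiSym.at_neg_two hnodd, ZMod.χ₈'_nat_eq_if_mod_eight]
    simp [hn8]; omega
  obtain ⟨H, hH⟩ := hdvd1
  have hHz : 2*(q:ℤ) + 1 = (n:ℤ)*(H:ℤ) := by exact_mod_cast hH
  have hJ4q : J((4*q : ℕ) | n) = J(-2 | n) := by
    apply jacobiSym.mod_left'
    have hd : ((n:ℕ):ℤ) ∣ (-2) - ((4*q:ℕ):ℤ) := ⟨-2*H, by push_cast; linarith [hHz]⟩
    exact Int.modEq_iff_dvd.mpr hd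
  have hJq : J((q:ℕ) | n) = 1 := by
    have hmul : J((4*q : ℕ) | n) = J((4:ℕ) | n) * J((q:ℕ) | n) := by
      push_cast
      rw [show ((4:ℤ) * q) = (4:ℤ) * (q:ℤ) from rfl, jacobiSym.mul_left]
    have h4 : J((4:ℕ) | n) = 1 := by
      have : ((4:ℕ):ℤ) = (2:ℤ)^2 := by norm_num
      rw [this, jacobiSym.pow_left, hJ2]; norm_num
    rw [h4, one_mul] at hmul
    rw [← hmul, hJ4q, hJneg2]
  have hJnq : J((n:ℕ) | q) = 1 := by
    rw [← jacobiSym.quadratic_reciprocity_one_mod_four hmod4 hnodd, hJq]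
  have hJ : J(-(n:ℤ) | q) = 1 := by
    rw [jacobiSym.neg _ hqodd, hJnq, ZMod.χ₄_nat_eq_if_mod_four]
    simp [hmod4]; omega
  -- get square root of -n mod q
  have hsq : IsSquare ((-(n:ℤ) : ℤ) : ZMod q) := ZMod.isSquare_of_jacobiSym_eq_one hJ
  obtain ⟨T, hT⟩ := hsq
  -- choose odd representative t
  set t₁ : ℕ := T.val with ht₁
  set t : ℕ := if t₁ % 2 = 0 then t₁ + q else t₁ with ht
  have htodd : t % 2 = 1 := by
    have hq2 : q % 2 = 1 := by omega
    rw [ht]; split_ifs with hc <;> omega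
  have htcast : ((t:ℕ) : ZMod q) = T := by
    have h1 : ((t₁:ℕ) : ZMod q) = T := by rw [ht₁, ZMod.natCast_val, ZMod.cast_id]
    rw [ht]; split_ifs with hc <;> simp [h1]
  -- q ∣ t² + n
  have hqdvd : (q:ℤ) ∣ ((t:ℤ)^2 + n) := by
    rw [← ZMod.intCast_zmod_eq_zero_iff_dvd]
    push_cast
    rw [htcast, pow_two, ← hT]
    push_cast
    ring
  have h2dvd : (2:ℤ) ∣ ((t:ℤ)^2 + n) := by
    have : ((t:ℤ)^2 + n) % 2 = 0 := by
      have h1 : (t:ℤ) % 2 = 1 := by omega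
      have h2 : (n:ℤ) % 2 = 1 := by omega
      have h3 : (t:ℤ)^2 % 2 = 1 := by
        have h4 : (t:ℤ)^2 = (t:ℤ)*(t:ℤ) := by ring
        rw [h4, Int.mul_emod, h1]; norm_num
      omega
    omega
  have hcop2q : IsCoprime (2:ℤ) (q:ℤ) := by
    refine ⟨((q:ℤ)+1)/2, -1, ?_⟩
    have hqo : (q:ℤ) % 2 = 1 := by omega
    omega
  have h2qdvd : (2*(q:ℤ)) ∣ ((t:ℤ)^2 + n) := hcop2q.mul_dvd h2dvd hqdvd
  obtain ⟨S, hS⟩ := h2qdvd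
  refine ⟨(q:ℤ), (H:ℤ), S, (t:ℤ), by exact_mod_cast hqprime.pos, by linarith [hHz], by linarith [hS]⟩


theorem three_squares (n : ℕ) (hn8 : n % 8 = 3) :
    ∃ p q r : ℤ, (n:ℤ) = p^2 + q^2 + r^2 := by
  obtain ⟨Q, H, S, t, hQ, hH, hS⟩ := three_squares_pre n hn8
  have hn0 : (0:ℤ) < (n:ℤ) := by
    have : 3 ≤ n := by omega
    exact_mod_cast by omega
  set nz : ℤ := (n:ℤ) with hnz
  have h2 : nz*(2*Q*H) - (2*Q)*(2*Q) = 2*Q := by linear_combination 2*Q*hH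
  have hdet : nz*(2*Q*H)*(H*S-1) + 2*(2*Q)*(-t)*(-(H*t)) - nz*(-(H*t))^2
      - (2*Q*H)*(-t)^2 - (H*S-1)*(2*Q)^2 = 1 := by
    linear_combination (nz*H - 2*Q + 1)*hH + (nz*H^2 - 2*Q*H)*hS
  have hpos : ∀ x y z : ℤ, ¬(x = 0 ∧ y = 0 ∧ z = 0) →
      0 < Fq nz (2*Q*H) (H*S-1) (2*Q) (-t) (-(H*t)) x y z := by
    intro x y z hne
    exact sylvester3 _ _ _ _ _ _ hn0 (by rw [show nz*(2*Q*H) - (2*Q)*(2*Q) = 2*Q from h2]; positivity)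
      (by linarith [hdet]) x y z hne
  have hrep : Fq nz (2*Q*H) (H*S-1) (2*Q) (-t) (-(H*t)) 1 0 0 = nz := by
    simp only [Fq]; ring
  exact ter_key nz.toNat nz (2*Q*H) (H*S-1) (2*Q) (-t) (-(H*t)) le_rfl hn0 hpos
    (by linarith [hdet]) nz ⟨1, 0, 0, hrep⟩

/-- (Gauss–Legendre) For every even integer `k ≥ 0` there exist integers `x, y, z`
with `x² + x + y² + y + z² + z = k`. -/
theorem exists_sum_three_pronic (k : ℤ) (hk : 0 ≤ k) (hke : Even k) :
    ∃ x y z : ℤ, x ^ 2 + x + y ^ 2 + y + z ^ 2 + z = k := by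
  obtain ⟨m, hm⟩ := hke
  set N : ℕ := (4*k+3).toNat with hNdef
  have hNz : (N:ℤ) = 4*k + 3 := by omega
  have hN8 : N % 8 = 3 := by omega
  obtain ⟨p, q, r, hpqr⟩ := three_squares N hN8
  rw [hNz] at hpqr
  have hodd : Odd p ∧ Odd q ∧ Odd r := by
    obtain ⟨P, hP⟩ : ∃ P, p^2 = P := ⟨_, rfl⟩
    obtain ⟨Qq, hQq⟩ : ∃ Qq, q^2 = Qq := ⟨_, rfl⟩
    obtain ⟨R, hR⟩ : ∃ R, r^2 = R := ⟨_, rfl⟩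
    rw [hP, hQq, hR] at hpqr
    rcases sq_mod4 p with ⟨h1, h1'⟩ | ⟨h1, h1'⟩ <;>
      rcases sq_mod4 q with ⟨h2, h2'⟩ | ⟨h2, h2'⟩ <;>
      rcases sq_mod4 r with ⟨h3, h3'⟩ | ⟨h3, h3'⟩ <;>
      rw [hP] at h1' <;> rw [hQq] at h2' <;> rw [hR] at h3' <;>
      first
        | exact ⟨h1, h2, h3⟩
        | omega
  obtain ⟨⟨x, hx⟩, ⟨y, hy⟩, ⟨z, hz⟩⟩ := hodd
  rw [hx, hy, hz] at hpqr
  refine ⟨x, y, z, ?_⟩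
  have h4 : 4*(x^2+x+y^2+y+z^2+z) + 3 = 4*k + 3 := by linear_combination -hpqr
  linarith [h4]
end

section
/- Let K ≥ 10⁵ be real, K₁ = 9K/10 and K₂ = K. Let m be a positive integer with (263/100)·K^{1/3} ≤ m ≤ (292/100)·K^{1/3}. Then the choices ε_m = 0 and δ_m = 1/10 satisfy: 0 ≤ ε_m < δ_m ≤ 1, K₁ ≥ (8δ_m³ + 1/36)m³ + 3m/4, and K₂ ≤ (8ε_m³ + 1/18)m³ + m/2. -/
/-- Parameter choice lemma: for `K ≥ 10⁵`, `K₁ = 9K/10`, `K₂ = K` and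
`(263/100)K^{1/3} ≤ m ≤ (292/100)K^{1/3}`, the choices `ε_m = 0`, `δ_m = 1/10`
satisfy conditions (iv), (v), (vi). -/
theorem parameter_choice (K : ℝ) (hK : (10 : ℝ) ^ 5 ≤ K) (m : ℕ) (hmpos : 0 < m)
    (hmlb : (263 / 100 : ℝ) * K ^ ((1 : ℝ) / 3) ≤ (m : ℝ))
    (hmub : (m : ℝ) ≤ (292 / 100 : ℝ) * K ^ ((1 : ℝ) / 3)) :
    ((0 : ℝ) ≤ 0 ∧ (0 : ℝ) < 1 / 10 ∧ (1 / 10 : ℝ) ≤ 1) ∧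
    (8 * (1 / 10 : ℝ) ^ 3 + 1 / 36) * (m : ℝ) ^ 3 + 3 * m / 4 ≤ 9 * K / 10 ∧
    K ≤ (8 * (0 : ℝ) ^ 3 + 1 / 18) * (m : ℝ) ^ 3 + m / 2 := by
  have hK0 : (0 : ℝ) < K := by norm_num at hK ⊢; linarith
  set c := K ^ ((1 : ℝ) / 3) with hcdef
  have hcpos : 0 < c := Real.rpow_pos_of_pos hK0 _
  have hc3 : c ^ 3 = K := by
    rw [hcdef, ← Real.rpow_natCast (K ^ ((1 : ℝ) / 3)) 3, ← Real.rpow_mul hK0.le]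
    norm_num
  have hc46 : (46 : ℝ) ≤ c := by
    nlinarith [hc3, hcpos, sq_nonneg (c - 46), sq_nonneg (c + 46)]
  have hub3 : (m : ℝ) ^ 3 ≤ (292 / 100 * c) ^ 3 :=
    pow_le_pow_left₀ (Nat.cast_nonneg m) hmub 3
  have hlb3 : (263 / 100 * c) ^ 3 ≤ (m : ℝ) ^ 3 :=
    pow_le_pow_left₀ (by positivity) hmlb 3
  have hc2c : 46 ^ 2 * c ≤ c ^ 3 := by nlinarith [mul_nonneg (mul_nonneg hcpos.le (by linarith : (0:ℝ) ≤ c - 46)) (by linarith : (0:ℝ) ≤ c + 46)]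
  refine ⟨⟨le_refl _, by norm_num, by norm_num⟩, ?_, ?_⟩
  · nlinarith [hub3, hmub, hc2c, hc3, hcpos]
  · nlinarith [hlb3, hc3, (Nat.cast_nonneg m : (0:ℝ) ≤ m), hcpos]
end

section
/- Let W₁ ⊆ W₂ be sets of positive integers with associated pairs (ε_m, δ_m) (0 ≤ ε_m < δ_m ≤ 1 for each m), let U = W₂ \ W₁, let Mᵢ = lcm(Wᵢ), and let π : [0, M₂) → [0, M₁) be given by π(x) = R(x, M₁). Then π(Bad(W₂)) ⊆ Bad(W₁), and Bad(W₂) ∩ [0, M₂) = π⁻¹(Bad(W₁) ∩ [0, M₁)) ∩ Bad(U). -/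
/-- The quotient `Q(x,m) = ⌊x/m⌋`. -/
noncomputable def quo (x : ℝ) (m : ℕ) : ℤ := ⌊x / m⌋

/-- The remainder `R(x,m) = x − Q(x,m)·m ∈ [0,m)`. -/
noncomputable def rem (x : ℝ) (m : ℕ) : ℝ := x - quo x m * m

/-- The bad set `Bad(m,ε,δ) = {x ∈ ℝ : R(x,m) ∉ [ε·m, δ·m)}`. -/
def Bad (m : ℕ) (ε δ : ℝ) : Set ℝ := {x | rem x m ∉ Set.Ico (ε * m) (δ * m)}

/-- `Bad(W) = ⋂_{m ∈ W} Bad(m, ε_m, δ_m)`. -/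
def BadW (W : Finset ℕ) (ε δ : ℕ → ℝ) : Set ℝ := ⋂ m ∈ W, Bad m (ε m) (δ m)

lemma rem_add_int_mul (x : ℝ) (k : ℤ) (m : ℕ) (hm : 0 < m) :
    rem (x + k * m) m = rem x m := by
  have hm' : (m : ℝ) ≠ 0 := by positivity
  unfold rem quo
  have h : (x + k * m) / m = x / m + k := by field_simp
  rw [h, Int.floor_add_intCast]
  push_cast
  ring

lemma rem_rem (x : ℝ) (m M : ℕ) (hm : 0 < m) (hdvd : m ∣ M) :
    rem (rem x M) m = rem x m := by
  obtain ⟨c, rfl⟩ := hdvd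
  have h : rem x (m * c) = x + ((-(quo x (m * c) * (c : ℤ)) : ℤ) : ℝ) * m := by
    unfold rem; push_cast; ring
  rw [h, rem_add_int_mul _ _ _ hm]

lemma rem_mem_Ico (x : ℝ) (m : ℕ) (hm : 0 < m) : rem x m ∈ Set.Ico (0 : ℝ) m := by
  have hm' : (0 : ℝ) < m := by positivity
  have h : rem x m = Int.fract (x / m) * m := by
    unfold rem quo Int.fract; field_simp
  rw [h]
  constructor
  · exact mul_nonneg (Int.fract_nonneg _) hm'.le
  · calc Int.fract (x / m) * m < 1 * m := by
          exact mul_lt_mul_of_pos_right (Int.fract_lt_one _) hm'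
      _ = m := one_mul _

lemma lcm_pos {W : Finset ℕ} (h : ∀ m ∈ W, 0 < m) : 0 < W.lcm id := by
  rw [Nat.pos_iff_ne_zero, Ne, Finset.lcm_eq_zero_iff]
  intro hmem
  simp only [Set.mem_image, Finset.mem_coe, id_eq] at hmem
  obtain ⟨m, hm, rfl⟩ := hmem
  exact absurd (h _ hm) (lt_irrefl 0)

/-- For `W₁ ⊆ W₂` with `Mᵢ = lcm(Wᵢ)` and `π(x) = R(x, M₁)`:
`π(Bad(W₂) ∩ [0,M₂)) ⊆ Bad(W₁)` and
`Bad(W₂) ∩ [0,M₂) = π⁻¹(Bad(W₁) ∩ [0,M₁)) ∩ Bad(W₂ \ W₁)`. -/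
theorem bad_natural_map (W₁ W₂ : Finset ℕ) (hsub : W₁ ⊆ W₂)
    (hpos : ∀ m ∈ W₂, 0 < m)
    (ε δ : ℕ → ℝ) (hεδ : ∀ m ∈ W₂, 0 ≤ ε m ∧ ε m < δ m ∧ δ m ≤ 1) :
    ((fun x => rem x (W₁.lcm id)) ''
        (BadW W₂ ε δ ∩ Set.Ico (0 : ℝ) ((W₂.lcm id : ℕ) : ℝ)) ⊆ BadW W₁ ε δ) ∧
    BadW W₂ ε δ ∩ Set.Ico (0 : ℝ) ((W₂.lcm id : ℕ) : ℝ) =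
      {x ∈ Set.Ico (0 : ℝ) ((W₂.lcm id : ℕ) : ℝ) |
          rem x (W₁.lcm id) ∈ BadW W₁ ε δ ∩ Set.Ico (0 : ℝ) ((W₁.lcm id : ℕ) : ℝ)} ∩
        BadW (W₂ \ W₁) ε δ := by
  have hM₁pos : 0 < W₁.lcm id := lcm_pos (fun m hm => hpos m (hsub hm))
  have key : ∀ x, ∀ m ∈ W₁, (rem x (W₁.lcm id) ∈ Bad m (ε m) (δ m) ↔ x ∈ Bad m (ε m) (δ m)) := by
    intro x m hm
    have hdvd : m ∣ W₁.lcm id := Finset.dvd_lcm hm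
    simp only [Bad, Set.mem_setOf_eq, rem_rem x m _ (hpos m (hsub hm)) hdvd]
  have himg : ∀ x, x ∈ BadW W₂ ε δ → rem x (W₁.lcm id) ∈ BadW W₁ ε δ := by
    intro x hx
    simp only [BadW, Set.mem_iInter] at hx ⊢
    intro m hm
    exact (key x m hm).2 (hx m (hsub hm))
  constructor
  · rintro y ⟨x, ⟨hx, _⟩, rfl⟩
    exact himg x hx
  · ext x
    simp only [Set.mem_inter_iff, Set.mem_setOf_eq]
    constructor
    · rintro ⟨hx, hxI⟩
      refine ⟨⟨hxI, himg x hx, rem_mem_Ico x _ hM₁pos⟩, ?_⟩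
      simp only [BadW, Set.mem_iInter] at hx ⊢
      intro m hm
      exact hx m (Finset.mem_sdiff.mp hm).1
    · rintro ⟨⟨hxI, hb1, _⟩, hU⟩
      refine ⟨?_, hxI⟩
      simp only [BadW, Set.mem_iInter] at hb1 hU ⊢
      intro m hm
      by_cases h1 : m ∈ W₁
      · exact (key x m h1).1 (hb1 m h1)
      · exact hU m (Finset.mem_sdiff.mpr ⟨hm, h1⟩)
end

section
/- Let L > 0 be real, let W be a non-empty set of positive integers all lying in the interval [(263/100)L, (292/100)L], let M = lcm(W), and suppose M ≥ 2000L. Take ε_m = 0 and δ_m = 1/10 for all m ∈ W. Let a/q ∈ [0,1) be a fraction in lowest terms with 1 ≤ q ≤ 9 and 0 ≤ a ≤ q−1. For 0 ≤ k ≤ 9−q set ψ_k = (292/100)(k/q + 1/10) and Ψ_k = (263/100)(k+1)/q. Then ψ_k < Ψ_k for each such k, and ⋃_{k=0}^{9−q} ( (a/q)M + ψ_k·L , (a/q)M + Ψ_k·L ) ⊆ Bad(W) ∩ [0, M). -/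
theorem rem_eq_mul_fract (x : ℝ) {m : ℕ} (hm : m ≠ 0) : rem x m = m * Int.fract (x / m) := by
  have : (m : ℝ) ≠ 0 := by exact_mod_cast hm
  rw [rem, quo, Int.fract]
  field_simp

theorem mem_Bad_iff_fract {m : ℕ} (hm : m ≠ 0) (x ε δ : ℝ) :
    x ∈ Bad m ε δ ↔ Int.fract (x / m) ∉ Set.Ico ε δ := by
  have hm' : (0 : ℝ) < m := by exact_mod_cast Nat.pos_of_ne_zero hm
  simp only [Bad, Set.mem_ofPred_eq, Set.mem_Ico, rem_eq_mul_fract x hm, mul_comm _ (m : ℝ),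
    mul_le_mul_iff_right₀ hm', mul_lt_mul_iff_right₀ hm']

theorem sub_le_fract_of_mem_Ico (p : ℤ) {q : ℕ} (hq : 0 < q) {t : ℝ}
    (hlo : (p : ℝ) / q ≤ t) (hhi : t < (p + 1) / q) : t - p / q ≤ Int.fract t := by
  have hq' : (0 : ℝ) < q := by exact_mod_cast hq
  set n := ⌊(p : ℝ) / q⌋
  have hp : p + 1 ≤ q * (n + 1) := by
    have h : (p : ℝ) < q * (n + 1) := by
      rw [← div_lt_iff₀' hq']; exact Int.lt_floor_add_one _
    exact_mod_cast h
  have hfloor : ⌊t⌋ = n := by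
    rw [Int.floor_eq_iff]
    refine ⟨(Int.floor_le _).trans hlo, hhi.trans_le ?_⟩
    rw [div_le_iff₀' hq']; exact_mod_cast hp
  rw [Int.fract, hfloor]
  linarith [Int.floor_le ((p : ℝ) / q)]

theorem div_add_mem_Bad_of_dvd {m M q : ℕ} (hm : m ≠ 0) (hmM : m ∣ M) (hq : 0 < q) (a k : ℤ)
    {δ θ : ℝ} (hδ : 0 ≤ δ) (hlo : k / q + δ < θ) (hhi : θ < (k + 1) / q) :
    a / q * M + θ * m ∈ Bad m 0 δ := by
  obtain ⟨s, rfl⟩ := hmM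
  have hm' : (m : ℝ) ≠ 0 := by exact_mod_cast hm
  set p : ℤ := a * s + k
  have hx : (a / q * ↑(m * s) + θ * m) / m = p / q + (θ - k / q) := by
    simp only [p]; push_cast; field_simp; ring
  have hp : ((p : ℝ) + 1) / q = p / q + ((k + 1) / q - k / q) := by ring
  have hfract := sub_le_fract_of_mem_Ico p hq (t := p / q + (θ - k / q))
    (by linarith) (by rw [hp]; linarith)
  rw [mem_Bad_iff_fract hm, hx, Set.mem_Ico, not_and_or, not_lt]
  right
  linarith

theorem Ioo_subset_Bad {m M q : ℕ} (hm : m ≠ 0) (hmM : m ∣ M) (hq : 0 < q) (a : ℤ) (k : ℕ)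
    {δ c C L : ℝ} (hδ : 0 ≤ δ) (hcm : c * L ≤ m) (hmC : m ≤ C * L) :
    Set.Ioo (a / q * M + C * (k / q + δ) * L) (a / q * M + c * ((k + 1) / q) * L) ⊆
      Bad m 0 δ := by
  intro x ⟨hlo, hhi⟩
  have hm' : (0 : ℝ) < m := by exact_mod_cast Nat.pos_of_ne_zero hm
  set θ := (x - a / q * M) / m
  have hx : x = a / q * M + θ * m := by simp only [θ]; field_simp; ring
  have hθlo : (k : ℝ) / q + δ < θ := by
    rw [lt_div_iff₀ hm']
    have : (k / q + δ) * m ≤ C * (k / q + δ) * L := by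
      nlinarith [show (0 : ℝ) ≤ k / q + δ by positivity]
    linarith
  have hθhi : θ < (k + 1) / q := by
    rw [div_lt_iff₀ hm']
    have : c * ((k + 1) / q) * L ≤ (k + 1) / q * m := by
      nlinarith [show (0 : ℝ) ≤ (k + 1) / q by positivity]
    linarith
  rw [hx]
  exact div_add_mem_Bad_of_dvd hm hmM hq a k hδ
    (by push_cast; exact hθlo) (by push_cast; exact hθhi)

theorem Ioo_subset_Ico_zero {M : ℝ} {a q : ℕ} (haq : a + 1 ≤ q) {u v : ℝ} (hu : 0 ≤ u)
    (hv : v ≤ M / q) (hM : 0 ≤ M) :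
    Set.Ioo (a / q * M + u) (a / q * M + v) ⊆ Set.Ico 0 M := by
  intro x ⟨hlo, hhi⟩
  have hq : (0 : ℝ) < q := by exact_mod_cast (Nat.succ_pos a).trans_le haq
  have haq' : ((a : ℝ) + 1) / q ≤ 1 := by rw [div_le_one hq]; exact_mod_cast haq
  constructor
  · have : 0 ≤ a / q * M := by positivity
    linarith
  · calc x < a / q * M + M / q := hhi.trans_le (by linarith)
      _ = (a + 1) / q * M := by ring
      _ ≤ M := mul_le_of_le_one_left hM haq'

theorem ripple_endpoints_lt {k q : ℕ} (hq : 0 < q) (hkq : k + q ≤ 9) :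
    (292 / 100 : ℝ) * ((k : ℝ) / q + 1 / 10) < (263 / 100 : ℝ) * (((k : ℝ) + 1) / q) := by
  have hq' : (0 : ℝ) < q := by exact_mod_cast hq
  have hkq' : (k : ℝ) + q ≤ 9 := by exact_mod_cast hkq
  rw [← sub_pos]
  have : (263 / 100 : ℝ) * ((k + 1) / q) - 292 / 100 * (k / q + 1 / 10) =
      (2630 - 290 * k - 292 * q) / (1000 * q) := by field_simp; ring
  rw [this]
  apply div_pos <;> nlinarith

theorem ripples_general (L : ℝ) (hL : 0 < L) (W : Finset ℕ)
    (hWint : ∀ m ∈ W, (263 / 100 : ℝ) * L ≤ (m : ℝ) ∧ (m : ℝ) ≤ (292 / 100 : ℝ) * L)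
    (hM : 2000 * L ≤ ((W.lcm id : ℕ) : ℝ))
    (a q : ℕ) (hq1 : 1 ≤ q) (hq9 : q ≤ 9) (ha : a ≤ q - 1) :
    (∀ k : ℕ, k ≤ 9 - q →
      (292 / 100 : ℝ) * ((k : ℝ) / q + 1 / 10) < (263 / 100 : ℝ) * (((k : ℝ) + 1) / q)) ∧
    (⋃ k ∈ Finset.range (9 - q + 1),
        Set.Ioo
          ((a : ℝ) / q * ((W.lcm id : ℕ) : ℝ) + (292 / 100 : ℝ) * ((k : ℝ) / q + 1 / 10) * L)
          ((a : ℝ) / q * ((W.lcm id : ℕ) : ℝ) + (263 / 100 : ℝ) * (((k : ℝ) + 1) / q) * L))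
      ⊆ BadW W (fun _ => 0) (fun _ => 1 / 10) ∩ Set.Ico (0 : ℝ) ((W.lcm id : ℕ) : ℝ) := by
  refine ⟨fun k hk => ripple_endpoints_lt hq1 (by omega), ?_⟩
  simp only [Set.iUnion_subset_iff, Finset.mem_range]
  intro k hk
  refine Set.subset_inter ?_ ?_
  · simp only [BadW, Set.subset_iInter_iff]
    intro m hm
    obtain ⟨hLm, hmL⟩ := hWint m hm
    have hm0 : m ≠ 0 := by
      rintro rfl
      norm_num at hLm
      linarith
    simpa only [Int.cast_natCast] using
      Ioo_subset_Bad hm0 (Finset.dvd_lcm (f := id) hm) hq1 a k (δ := 1 / 10) (by norm_num) hLm hmL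
  · have hq : (0 : ℝ) < q := by exact_mod_cast hq1
    have hk9 : (k : ℝ) + 1 ≤ 9 := by exact_mod_cast (show k + 1 ≤ 9 by omega)
    refine Ioo_subset_Ico_zero (by omega) (by positivity) ?_ (by linarith)
    rw [mul_div_assoc', div_mul_eq_mul_div, div_le_div_iff_of_pos_right hq]
    nlinarith

/-- Ripples: for `a/q` in lowest terms with `q ≤ 9`, the union of the intervals
`((a/q)M + ψ_k·L, (a/q)M + Ψ_k·L)` for `0 ≤ k ≤ 9 − q` is contained in
`Bad(W) ∩ [0, M)`, where `ψ_k = (292/100)(k/q + 1/10)` and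
`Ψ_k = (263/100)(k+1)/q`. -/
theorem ripples (L : ℝ) (hL : 0 < L) (W : Finset ℕ) (hW : W.Nonempty)
    (hWint : ∀ m ∈ W, (263 / 100 : ℝ) * L ≤ (m : ℝ) ∧ (m : ℝ) ≤ (292 / 100 : ℝ) * L)
    (hM : 2000 * L ≤ ((W.lcm id : ℕ) : ℝ))
    (a q : ℕ) (hq1 : 1 ≤ q) (hq9 : q ≤ 9) (ha : a ≤ q - 1) (hcop : Nat.Coprime a q) :
    (∀ k : ℕ, k ≤ 9 - q →
      (292 / 100 : ℝ) * ((k : ℝ) / q + 1 / 10) < (263 / 100 : ℝ) * (((k : ℝ) + 1) / q)) ∧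
    (⋃ k ∈ Finset.range (9 - q + 1),
        Set.Ioo
          ((a : ℝ) / q * ((W.lcm id : ℕ) : ℝ) + (292 / 100 : ℝ) * ((k : ℝ) / q + 1 / 10) * L)
          ((a : ℝ) / q * ((W.lcm id : ℕ) : ℝ) + (263 / 100 : ℝ) * (((k : ℝ) + 1) / q) * L))
      ⊆ BadW W (fun _ => 0) (fun _ => 1 / 10) ∩ Set.Ico (0 : ℝ) ((W.lcm id : ℕ) : ℝ) :=
  ripples_general L hL W hWint hM a q hq1 hq9 ha
end

section
/- Let L > 0 be real, let W be a non-empty set of positive integers all lying in the interval [(263/100)L, (292/100)L], and let M = lcm(W); take ε_m = 0 and δ_m = 1/10 for all m ∈ W. Let a/q ∈ (0,1) be a rational in lowest terms with q ≥ 11 and 1 ≤ a ≤ q−1. Let d be an integer with (q−10)/10 < d < q−1, and let s be a non-negative integer with s < q−d−1 and s < (263/290)(10d + 10 − q). Suppose none of the residue classes s+1, s+2, ..., s+d modulo q equals aM/m mod q for any m ∈ W. Set π = (292/100)·s/q and Π = (263/100)·((s+d+1)/q − 1/10). Then π < Π and the interval ( (a/q)M − Π·L , (a/q)M − π·L ) is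 contained in Bad(W). -/
set_option maxHeartbeats 1000000 in
/-- Ripples from `aM/q` for larger `q`: if the residues `s+1, …, s+d` mod `q`
all avoid `{aM/m mod q : m ∈ W}`, then with `π = (292/100)s/q` and
`Π = (263/100)((s+d+1)/q − 1/10)` we have `π < Π` and
`((a/q)M − Π·L, (a/q)M − π·L) ⊆ Bad(W)`. -/
theorem ripples_large_q (L : ℝ) (hL : 0 < L) (W : Finset ℕ) (hW : W.Nonempty)
    (hWint : ∀ m ∈ W, (263 / 100 : ℝ) * L ≤ (m : ℝ) ∧ (m : ℝ) ≤ (292 / 100 : ℝ) * L)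
    (a q : ℕ) (hq : 11 ≤ q) (ha1 : 1 ≤ a) (ha2 : a ≤ q - 1) (hcop : Nat.Coprime a q)
    (d : ℕ) (hd1 : ((q : ℝ) - 10) / 10 < (d : ℝ)) (hd2 : (d : ℝ) < (q : ℝ) - 1)
    (s : ℕ) (hs1 : (s : ℝ) < (q : ℝ) - d - 1)
    (hs2 : (s : ℝ) < (263 / 290 : ℝ) * (10 * (d : ℝ) + 10 - q))
    (hres : ∀ m ∈ W, ∀ j : ℕ, 1 ≤ j → j ≤ d →
      ((s + j : ℕ) : ZMod q) ≠ ((a * (W.lcm id / m) : ℕ) : ZMod q)) :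
    (292 / 100 : ℝ) * ((s : ℝ) / q)
        < (263 / 100 : ℝ) * (((s : ℝ) + d + 1) / q - 1 / 10) ∧
    Set.Ioo
        ((a : ℝ) / q * ((W.lcm id : ℕ) : ℝ)
          - (263 / 100 : ℝ) * (((s : ℝ) + d + 1) / q - 1 / 10) * L)
        ((a : ℝ) / q * ((W.lcm id : ℕ) : ℝ) - (292 / 100 : ℝ) * ((s : ℝ) / q) * L)
      ⊆ BadW W (fun _ => 0) (fun _ => 1 / 10) := by
  have hqR : (11:ℝ) ≤ q := by exact_mod_cast hq
  have hq0 : (0:ℝ) < q := by linarith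
  have hq0' : (q:ℝ) ≠ 0 := ne_of_gt hq0
  have hsdq : (s:ℝ) + d + 1 ≤ q := by linarith
  have key : (292/100:ℝ) * s < (263/100) * (((s:ℝ)+d+1) - q/10) := by linarith
  have hpi : (292 / 100 : ℝ) * ((s : ℝ) / q)
      < (263 / 100 : ℝ) * (((s : ℝ) + d + 1) / q - 1 / 10) := by
    have h1 : (263/100:ℝ) * (((s:ℝ)+d+1)/q - 1/10)
        = ((263/100) * (((s:ℝ)+d+1) - q/10))/q := by
      rw [eq_div_iff hq0']; field_simp
    have h2 : (292/100:ℝ) * ((s:ℝ)/q) = ((292/100) * (s:ℝ))/q := by ring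
    rw [h1, h2]
    exact (div_lt_div_iff_of_pos_right hq0).mpr key
  refine ⟨hpi, ?_⟩
  intro x hx
  set M := W.lcm id with hMdef
  have hπ0 : (0:ℝ) ≤ (292/100) * ((s:ℝ)/q) := by positivity
  simp only [BadW, Set.mem_iInter]
  intro m hm
  obtain ⟨hm1, hm2⟩ := hWint m hm
  have hmpos : (0:ℝ) < m := by linarith
  have hm0 : (m:ℝ) ≠ 0 := ne_of_gt hmpos
  have hdvd : m ∣ M := Finset.dvd_lcm hm
  set A : ℕ := a * (M / m) with hAdef
  have hAm : (A:ℝ) * m = (a:ℝ) * M := by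
    have : A * m = a * M := by rw [hAdef, mul_assoc, Nat.div_mul_cancel hdvd]
    exact_mod_cast this
  set u : ℝ := ((a:ℝ)/q * M - x)/m with hudef
  have hP : (a:ℝ)/q * M = (A:ℝ)/q * m := by
    rw [div_mul_eq_mul_div, div_mul_eq_mul_div, ← hAm]
  have hxm : x/m = (A:ℝ)/q - u := by
    rw [hudef, hP]; field_simp; ring
  have hul : (s:ℝ)/q < u := by
    have hsq : (0:ℝ) ≤ (s:ℝ)/q := by positivity
    have h1 : (s:ℝ)/q * m ≤ (292/100) * ((s:ℝ)/q) * L := by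
      have := mul_le_mul_of_nonneg_left hm2 hsq
      linarith
    rw [hudef, lt_div_iff₀ hmpos]
    have h2 := hx.2
    linarith
  have hβpos : (0:ℝ) < ((s:ℝ)+d+1)/q - 1/10 := by linarith
  have huu : u < ((s:ℝ)+d+1)/q - 1/10 := by
    have h1 : (263/100:ℝ) * (((s:ℝ)+d+1)/q - 1/10) * L ≤ (((s:ℝ)+d+1)/q - 1/10) * m := by
      have := mul_le_mul_of_nonneg_left hm1 hβpos.le
      linarith
    rw [hudef, div_lt_iff₀ hmpos]
    have h2 := hx.1
    linarith
  have hβ1 : ((s:ℝ)+d+1)/q ≤ 1 := by rw [div_le_one hq0]; linarith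
  have hu9 : u < 9/10 := by linarith
  have hu0 : (0:ℝ) < u := lt_of_le_of_lt (by positivity) hul
  set k := A / q with hkdef
  set r := A % q with hrdef
  have hAkr : q * k + r = A := Nat.div_add_mod A q
  have hrq : r < q := Nat.mod_lt _ (by omega)
  have hAR : (A:ℝ) = q*k + r := by exact_mod_cast hAkr.symm
  have hAq : (A:ℝ)/q = k + (r:ℝ)/q := by rw [hAR]; field_simp
  have hcase : r ≤ s ∨ s + d + 1 ≤ r := by
    by_contra h
    push_neg at h
    obtain ⟨h1, h2⟩ := h
    refine hres m hm (r - s) (by omega) (by omega) ?_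
    have he : s + (r - s) = r := by omega
    rw [he, hrdef, ZMod.natCast_mod, ← hAdef]
  have hx' : x = ((A:ℝ)/q - u) * m := by
    rw [← hxm, div_mul_cancel₀ x hm0]
  simp only [Bad, Set.mem_setOf_eq, Set.mem_Ico, not_and, not_lt]
  intro _
  have hr0 : (0:ℝ) ≤ (r:ℝ)/q := by positivity
  rcases hcase with hc | hc
  · -- r ≤ s : floor is k - 1
    have hru : (r:ℝ)/q < u := by
      refine lt_of_le_of_lt ?_ hul
      gcongr <;> exact_mod_cast hc
    have hfloor : quo x m = (k:ℤ) - 1 := by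
      rw [quo, Int.floor_eq_iff, hxm, hAq]
      push_cast
      constructor <;> linarith
    rw [rem, hfloor, hx', hAq]
    push_cast
    have h9 : (1/10:ℝ) ≤ (r:ℝ)/q - u + 1 := by linarith
    nlinarith [mul_le_mul_of_nonneg_right h9 hmpos.le]
  · -- s + d + 1 ≤ r : floor is k
    have hru : (1/10:ℝ) < (r:ℝ)/q - u := by
      have h1 : ((s:ℝ)+d+1)/q ≤ (r:ℝ)/q := by
        gcongr <;> exact_mod_cast hc
      linarith
    have hr1 : (r:ℝ)/q < 1 := by
      rw [div_lt_one hq0]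
      exact_mod_cast hrq
    have hfloor : quo x m = (k:ℤ) := by
      rw [quo, Int.floor_eq_iff, hxm, hAq]
      push_cast
      constructor <;> linarith
    rw [rem, hfloor, hx', hAq]
    push_cast
    nlinarith [mul_le_mul_of_nonneg_right hru.le hmpos.le]
end

section
/- Let W be a non-empty finite set of positive integers with M = lcm(W), let a/q ∈ [0,1] be a rational in lowest terms, and let Φ : W → ℤ/qℤ be the map m ↦ a(M/m) mod q. Let d = d(W, a/q) be the defect, i.e., the length of the longest run of consecutive residue classes s+1, s+2, ..., s+d in ℤ/qℤ all lying outside the image Φ(W). Then for every real number x, there exist m ∈ W and an integer k such that |x − aM/(qm) − k| ≤ (d+1)/(2q). -/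
/-- The image `Φ_{a/q}(W) = {a·(M/m) mod q : m ∈ W} ⊆ ℤ/qℤ`, where `M = lcm(W)`. -/
def phiImage (W : Finset ℕ) (a q : ℕ) : Set (ZMod q) :=
  {r | ∃ m ∈ W, r = ((a * (W.lcm id / m) : ℕ) : ZMod q)}

/-- The defect `d(W, a/q)`: the length of the longest run of consecutive residue
classes `s+1, s+2, …, s+d` in `ℤ/qℤ` all lying outside the image `Φ_{a/q}(W)`. -/
noncomputable def defect (W : Finset ℕ) (a q : ℕ) : ℕ :=
  sSup {d : ℕ | ∃ s : ZMod q, ∀ j : ℕ, 1 ≤ j → j ≤ d → s + (j : ZMod q) ∉ phiImage W a q}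

/-- If `d = d(W, a/q)` is the defect, then every real `x` is within
`(d+1)/(2q)` of `aM/(qm) + k` for some `m ∈ W` and integer `k`. -/
theorem near_some_aM_qm (W : Finset ℕ) (hW : W.Nonempty) (hpos : ∀ m ∈ W, 0 < m)
    (a q : ℕ) (hq : 0 < q) (haq : a ≤ q) (hcop : Nat.Coprime a q) (x : ℝ) :
    ∃ m ∈ W, ∃ k : ℤ,
      |x - (a : ℝ) * ((W.lcm id : ℕ) : ℝ) / ((q : ℝ) * m) - (k : ℝ)|
        ≤ ((defect W a q : ℝ) + 1) / (2 * q) := by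
  haveI : NeZero q := ⟨hq.ne'⟩
  set M := W.lcm id with hM
  set d := defect W a q with hd
  set S : Set ℕ := {e : ℕ | ∃ s : ZMod q, ∀ j : ℕ, 1 ≤ j → j ≤ e →
    s + (j : ZMod q) ∉ phiImage W a q} with hS
  have hdS : d = sSup S := rfl
  set n0 : ℤ := ⌈(q : ℝ) * x - ((d : ℝ) + 1) / 2⌉ with hn0
  -- boundedness of S
  have hS_bdd : BddAbove S := by
    obtain ⟨m0, hm0⟩ := hW
    refine ⟨q - 1, fun e he => ?_⟩
    obtain ⟨s, hs⟩ := he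
    by_contra hcon
    have hqe : q ≤ e := by omega
    set z : ZMod q := ((a * (M / m0) : ℕ) : ZMod q) with hz
    have hzmem : z ∈ phiImage W a q := ⟨m0, hm0, rfl⟩
    have : ∃ j : ℕ, 1 ≤ j ∧ j ≤ q ∧ s + (j : ZMod q) = z := by
      by_cases h0 : (z - s).val = 0
      · refine ⟨q, hq, le_refl q, ?_⟩
        have hzs : z - s = 0 := by
          have := ZMod.val_eq_zero (z - s)
          exact this.mp h0
        have hzeq : z = s := by
          have := sub_eq_zero.mp hzs; exact this
        simp [hzeq, ZMod.natCast_self]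
      · refine ⟨(z - s).val, Nat.one_le_iff_ne_zero.2 h0, (ZMod.val_lt _).le, ?_⟩
        rw [ZMod.natCast_val, ZMod.cast_id]
        ring
    obtain ⟨j, h1, h2, h3⟩ := this
    exact hs j h1 (h2.trans hqe) (h3 ▸ hzmem)
  -- the key claim: some point in the window has residue in the image
  have key : ∃ j : ℕ, j ≤ d ∧ ((n0 + (j : ℤ) : ℤ) : ZMod q) ∈ phiImage W a q := by
    by_contra h
    push_neg at h
    have hmem : d + 1 ∈ S := by
      refine ⟨((n0 - 1 : ℤ) : ZMod q), fun j h1 h2 => ?_⟩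
      have heq : ((n0 - 1 : ℤ) : ZMod q) + (j : ZMod q)
          = ((n0 + ((j - 1 : ℕ) : ℤ) : ℤ) : ZMod q) := by
        have : ((j - 1 : ℕ) : ℤ) = (j : ℤ) - 1 := by
          exact_mod_cast Int.ofNat_sub h1
        rw [this]
        push_cast
        ring
      rw [heq]
      exact h (j - 1) (by omega)
    have := le_csSup hS_bdd hmem
    rw [← hdS] at this
    omega
  obtain ⟨j, hjd, m, hmW, hres⟩ := key
  refine ⟨m, hmW, ?_⟩
  set A : ℕ := a * (M / m) with hA
  have hdvd : (q : ℤ) ∣ (n0 + (j : ℤ) - (A : ℤ)) := by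
    have h0 : ((n0 + (j : ℤ) - (A : ℤ) : ℤ) : ZMod q) = 0 := by
      push_cast at hres ⊢
      rw [hres]
      ring
    exact (ZMod.intCast_zmod_eq_zero_iff_dvd _ _).mp h0
  obtain ⟨k, hk⟩ := hdvd
  refine ⟨k, ?_⟩
  have hmM : m ∣ M := Finset.dvd_lcm hmW
  have hm0 : (0 : ℝ) < m := by exact_mod_cast hpos m hmW
  have hq0 : (0 : ℝ) < q := by exact_mod_cast hq
  have hMm : (M : ℝ) = (m : ℝ) * ((M / m : ℕ) : ℝ) := by
    rw [← Nat.cast_mul, Nat.mul_div_cancel' hmM]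
  have hval : (a : ℝ) * (M : ℝ) / ((q : ℝ) * m) = (A : ℝ) / q := by
    rw [hMm, hA]
    push_cast
    rw [div_eq_div_iff (by positivity) hq0.ne']
    ring
  rw [hval]
  have hnj : (A : ℝ) + (q : ℝ) * (k : ℝ) = (n0 : ℝ) + (j : ℝ) := by
    have : ((n0 + (j : ℤ) - (A : ℤ) : ℤ) : ℝ) = (((q : ℤ) * k : ℤ) : ℝ) := by
      rw [hk]
    push_cast at this
    linarith
  have hrw : x - (A : ℝ) / q - (k : ℝ) = ((q : ℝ) * x - ((n0 : ℝ) + (j : ℝ))) / q := by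
    field_simp
    linarith
  rw [hrw, abs_div, abs_of_pos hq0,
    show ((d : ℝ) + 1) / (2 * q) = (((d : ℝ) + 1) / 2) / q by ring]
  have h1 : (q : ℝ) * x - ((d : ℝ) + 1) / 2 ≤ (n0 : ℝ) := Int.le_ceil _
  have h2 : (n0 : ℝ) < (q : ℝ) * x - ((d : ℝ) + 1) / 2 + 1 := Int.ceil_lt_add_one _
  have hj : (j : ℝ) ≤ (d : ℝ) := by exact_mod_cast hjd
  have hj0 : (0 : ℝ) ≤ (j : ℝ) := Nat.cast_nonneg j
  have habs : |(q : ℝ) * x - ((n0 : ℝ) + (j : ℝ))| ≤ ((d : ℝ) + 1) / 2 := by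
    rw [abs_le]
    constructor <;> linarith
  exact div_le_div_of_nonneg_right habs hq0.le
end

section
/- Let W be a finite set of positive integers with associated real pairs (ε_m, δ_m), 0 ≤ ε_m < δ_m ≤ 1. Let A < B be real numbers, and for m ∈ W set q_m = Q(A, m) and r_m = R(A, m). Suppose there exists n ∈ W with ε_n·n ≤ r_n < δ_n·n, and let A′ = min((q_n + δ_n)·n, B). Then Bad(W) ∩ [A, B) = Bad(W) ∩ [A′, B). -/
/-- Lemma on intersecting with `[A,B)`, case (a): if `R(A,n) ∈ [ε_n·n, δ_n·n)`
for some `n ∈ W`, and `A′ = min((Q(A,n) + δ_n)·n, B)`, then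
`Bad(W) ∩ [A,B) = Bad(W) ∩ [A′,B)`. -/
theorem bad_inter_Ico_case_a (W : Finset ℕ) (hpos : ∀ m ∈ W, 0 < m)
    (ε δ : ℕ → ℝ) (hεδ : ∀ m ∈ W, 0 ≤ ε m ∧ ε m < δ m ∧ δ m ≤ 1)
    (A B : ℝ) (hAB : A < B)
    (n : ℕ) (hn : n ∈ W)
    (hr1 : ε n * n ≤ rem A n) (hr2 : rem A n < δ n * n) :
    BadW W ε δ ∩ Set.Ico A B =
      BadW W ε δ ∩ Set.Ico (min (((quo A n : ℝ) + δ n) * n) B) B := by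
  have hn0 : (0:ℝ) < n := by exact_mod_cast hpos n hn
  obtain ⟨hε0, hεδn, hδ1⟩ := hεδ n hn
  have hA : rem A n = A - quo A n * n := rfl
  have hA' : A ≤ min (((quo A n : ℝ) + δ n) * n) B := by
    apply le_min
    · nlinarith
    · exact hAB.le
  ext x
  simp only [Set.mem_inter_iff, Set.mem_Ico]
  constructor
  · rintro ⟨hbad, hx1, hx2⟩
    refine ⟨hbad, ?_, hx2⟩
    by_contra hlt
    push_neg at hlt
    have hx3 : x < ((quo A n : ℝ) + δ n) * n := lt_of_lt_of_le hlt (min_le_left _ _)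
    have hge : (quo A n : ℝ) * n + ε n * n ≤ x := by nlinarith
    have hfloor : quo x n = quo A n := by
      show ⌊x / (n:ℝ)⌋ = quo A n
      rw [Int.floor_eq_iff]
      constructor
      · rw [le_div_iff₀ hn0]; nlinarith
      · rw [div_lt_iff₀ hn0]; push_cast; nlinarith
    have hmem : rem x n ∈ Set.Ico (ε n * n) (δ n * n) := by
      simp only [rem, hfloor, Set.mem_Ico]
      constructor <;> nlinarith
    simp only [BadW, Set.mem_iInter] at hbad
    exact hbad n hn hmem
  · rintro ⟨hbad, hx1, hx2⟩
    exact ⟨hbad, le_trans hA' hx1, hx2⟩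
end

section
/- Let W be a finite set of positive integers with associated real pairs (ε_m, δ_m), 0 ≤ ε_m < δ_m ≤ 1. Let A < B be real numbers, and for m ∈ W set q_m = Q(A, m) and r_m = R(A, m). Suppose r_m ∉ [ε_m·m, δ_m·m) for all m ∈ W. For each m ∈ W define A_m = (q_m + ε_m)·m if r_m < ε_m·m, and A_m = (q_m + 1 + ε_m)·m if r_m ≥ δ_m·m; let A′ = min(B, min_{m∈W} A_m). Then Bad(W) ∩ [A, B) = (Bad(W) ∩ [A′, B)) ∪ [A, A′). -/
lemma rem_nonneg (x : ℝ) (m : ℕ) (hm : 0 < m) : 0 ≤ rem x m := by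
  have hm' : (0:ℝ) < m := by exact_mod_cast hm
  have h := (le_div_iff₀ hm').mp (Int.floor_le (x / m))
  unfold rem quo
  linarith

lemma rem_lt (x : ℝ) (m : ℕ) (hm : 0 < m) : rem x m < m := by
  have hm' : (0:ℝ) < m := by exact_mod_cast hm
  have h := (div_lt_iff₀ hm').mp (Int.lt_floor_add_one (x / m))
  unfold rem quo
  nlinarith

lemma quo_eq (x : ℝ) (m : ℕ) (hm : 0 < m) (q : ℤ)
    (h1 : (q:ℝ) * m ≤ x) (h2 : x < (q+1) * m) : quo x m = q := by
  have hm' : (0:ℝ) < m := by exact_mod_cast hm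
  unfold quo
  rw [Int.floor_eq_iff]
  constructor
  · rw [le_div_iff₀ hm']; exact h1
  · rw [div_lt_iff₀ hm']; push_cast; linarith

/-- Key lemma: points in `[A, Am m)` are bad for `m`. -/
lemma mem_bad_of_lt_Am (m : ℕ) (hm : 0 < m) (εm δm : ℝ)
    (hε : 0 ≤ εm) (hεδ : εm < δm) (hδ : δm ≤ 1)
    (A : ℝ) (hr : rem A m ∉ Set.Ico (εm * m) (δm * m))
    (Amv : ℝ)
    (hAm : Amv = if rem A m < εm * m then ((quo A m : ℝ) + εm) * m
      else ((quo A m : ℝ) + 1 + εm) * m)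
    (x : ℝ) (hx1 : A ≤ x) (hx2 : x < Amv) : rem x m ∉ Set.Ico (εm * m) (δm * m) := by
  have hm' : (0:ℝ) < m := by exact_mod_cast hm
  set q : ℤ := quo A m with hq
  have hA : A = q * m + rem A m := by unfold rem; ring
  have hr0 : 0 ≤ rem A m := rem_nonneg A m hm
  have hrm : rem A m < m := rem_lt A m hm
  by_cases hcase : rem A m < εm * m
  · rw [if_pos hcase] at hAm
    have hquo : quo x m = q := by
      apply quo_eq x m hm
      · nlinarith
      · push_cast; nlinarith
    have : rem x m < εm * m := by
      unfold rem; rw [hquo]; nlinarith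
    intro hmem; exact absurd hmem.1 (by linarith)
  · rw [if_neg hcase] at hAm
    push_neg at hcase
    have hrδ : δm * m ≤ rem A m := by
      by_contra h
      push_neg at h
      exact hr ⟨hcase, h⟩
    by_cases h2 : x < (q + 1) * m
    · have hquo : quo x m = q := quo_eq x m hm q (by nlinarith) (by push_cast; nlinarith)
      have : δm * m ≤ rem x m := by
        unfold rem; rw [hquo]; nlinarith
      intro hmem; exact absurd hmem.2 (by linarith)
    · push_neg at h2
      have hquo : quo x m = q + 1 := by
        apply quo_eq x m hm
        · push_cast; nlinarith
        · push_cast; nlinarith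
      have : rem x m < εm * m := by
        unfold rem; rw [hquo]; push_cast; nlinarith
      intro hmem; exact absurd hmem.1 (by linarith)

/-- Lemma on intersecting with `[A,B)`, case (b): if `R(A,m) ∉ [ε_m·m, δ_m·m)`
for all `m ∈ W`, then with `A_m` as defined and `A′ = min(B, min_{m ∈ W} A_m)`,
`Bad(W) ∩ [A,B) = (Bad(W) ∩ [A′,B)) ∪ [A,A′)`. -/
theorem bad_inter_Ico_case_b (W : Finset ℕ) (hW : W.Nonempty)
    (hpos : ∀ m ∈ W, 0 < m)
    (ε δ : ℕ → ℝ) (hεδ : ∀ m ∈ W, 0 ≤ ε m ∧ ε m < δ m ∧ δ m ≤ 1)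
    (A B : ℝ) (hAB : A < B)
    (hr : ∀ m ∈ W, rem A m ∉ Set.Ico (ε m * m) (δ m * m))
    (Am : ℕ → ℝ)
    (hAm : ∀ m ∈ W, Am m =
      if rem A m < ε m * m then ((quo A m : ℝ) + ε m) * m
      else ((quo A m : ℝ) + 1 + ε m) * m)
    (A' : ℝ) (hA' : A' = min B (W.inf' hW Am)) :
    BadW W ε δ ∩ Set.Ico A B =
      (BadW W ε δ ∩ Set.Ico A' B) ∪ Set.Ico A A' := by
  -- A < Am m for all m ∈ W
  have hAAm : ∀ m ∈ W, A < Am m := by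
    intro m hm
    have hm' : (0:ℝ) < m := by exact_mod_cast hpos m hm
    obtain ⟨h1, h2, h3⟩ := hεδ m hm
    have hA : A = (quo A m : ℝ) * m + rem A m := by unfold rem; ring
    have hr0 : 0 ≤ rem A m := rem_nonneg A m (hpos m hm)
    have hrm : rem A m < m := rem_lt A m (hpos m hm)
    rw [hAm m hm]
    split_ifs with h
    · nlinarith
    · nlinarith
  have hAA' : A < A' := by
    rw [hA', lt_min_iff]
    exact ⟨hAB, by rw [Finset.lt_inf'_iff]; exact hAAm⟩
  have hA'B : A' ≤ B := hA' ▸ min_le_left _ _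
  -- [A, A') ⊆ BadW
  have hIco : Set.Ico A A' ⊆ BadW W ε δ := by
    intro x ⟨hx1, hx2⟩
    simp only [BadW, Set.mem_iInter]
    intro m hm
    obtain ⟨h1, h2, h3⟩ := hεδ m hm
    have hxAm : x < Am m := lt_of_lt_of_le hx2 (by
      rw [hA']
      exact le_trans (min_le_right _ _) (Finset.inf'_le _ hm))
    exact mem_bad_of_lt_Am m (hpos m hm) (ε m) (δ m) h1 h2 h3 A (hr m hm) (Am m)
      (hAm m hm) x hx1 hxAm
  ext x
  simp only [Set.mem_inter_iff, Set.mem_union, Set.mem_Ico]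
  constructor
  · rintro ⟨hb, hx1, hx2⟩
    rcases lt_or_ge x A' with h | h
    · exact Or.inr ⟨hx1, h⟩
    · exact Or.inl ⟨hb, h, hx2⟩
  · rintro (⟨hb, hx1, hx2⟩ | ⟨hx1, hx2⟩)
    · exact ⟨hb, le_trans hAA'.le hx1, hx2⟩
    · exact ⟨hIco ⟨hx1, hx2⟩, hx1, lt_of_lt_of_le hx2 hA'B⟩
end
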